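/- arXiv:quant-ph/0103135 — 7 statements merged into one kernel-verified Lean document; each statement's English description precedes it below -/
import Mathlib

section
/- An ortholattice is orthomodular if and only if for all a, b: (a ∩ b) ∪ (a' ∩ b') = 1 implies a = b. -/
class Ortholattice (α : Type*) extends Lattice α, BoundedOrder α, Compl α where
  compl_compl : ∀ a : α, aᶜᶜ = a
  sup_compl : ∀ a : α, a ⊔ aᶜ = ⊤
  inf_compl : ∀ a : α, a ⊓ aᶜ = ⊥
  compl_antitone : ∀ a b : α, a ≤ b → bᶜ ≤ aᶜ

class OrthomodularLattice (α : Type*) extends Ortholattice α where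
  orthomodular : ∀ a b : α, a ≤ b → b = a ⊔ (aᶜ ⊓ b)

namespace OLaux

variable {α : Type*} [Ortholattice α]

lemma cc (a : α) : aᶜᶜ = a := Ortholattice.compl_compl a

lemma anti {a b : α} (h : a ≤ b) : bᶜ ≤ aᶜ := Ortholattice.compl_antitone a b h

lemma le_compl_of_compl_le {a b : α} (h : aᶜ ≤ b) : bᶜ ≤ a := by
  have := anti h
  rwa [cc] at this

lemma compl_le_of_le_compl {a b : α} (h : a ≤ bᶜ) : b ≤ aᶜ := by
  have := anti h
  rwa [cc] at this

lemma compl_inj {a b : α} (h : aᶜ = bᶜ) : a = b := by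
  have := congrArg Compl.compl h
  rwa [cc, cc] at this

lemma compl_sup (a b : α) : (a ⊔ b)ᶜ = aᶜ ⊓ bᶜ := by
  apply le_antisymm
  · exact le_inf (anti le_sup_left) (anti le_sup_right)
  · apply compl_le_of_le_compl
    exact sup_le (compl_le_of_le_compl inf_le_left)
      (compl_le_of_le_compl inf_le_right)

lemma top_compl : (⊤ : α)ᶜ = ⊥ := by
  have := Ortholattice.inf_compl (⊤ : α)
  rwa [top_inf_eq] at this

lemma bot_compl : (⊥ : α)ᶜ = ⊤ := by
  have := cc (⊤ : α)
  rwa [top_compl] at this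

/-- key intermediate form -/
lemma key_iff :
    (∀ a b : α, a ≤ b → b = a ⊔ (aᶜ ⊓ b)) ↔
      (∀ a b : α, a ≤ b → aᶜ ⊓ b = ⊥ → a = b) := by
  constructor
  · intro om a b hab h0
    have := om a b hab
    rw [h0, sup_bot_eq] at this
    exact this.symm
  · intro H a b hab
    have hcb : a ⊔ (aᶜ ⊓ b) ≤ b := sup_le hab inf_le_right
    apply (H _ _ hcb ?_).symm
    rw [compl_sup]
    have : (aᶜ ⊓ (aᶜ ⊓ b)ᶜ) ⊓ b = (aᶜ ⊓ b) ⊓ (aᶜ ⊓ b)ᶜ := by ac_rfl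
    rw [this, Ortholattice.inf_compl]

end OLaux

theorem stmt2 {α : Type*} [Ortholattice α] :
    (∀ a b : α, a ≤ b → b = a ⊔ (aᶜ ⊓ b)) ↔ (∀ a b : α, (a ⊓ b) ⊔ (aᶜ ⊓ bᶜ) = ⊤ → a = b) := by
  rw [OLaux.key_iff]
  constructor
  · intro H a b htop
    -- from htop : complements give (a⊓b)ᶜ ⊓ (aᶜ⊓bᶜ)ᶜ = ⊥
    have h0 : (a ⊓ b)ᶜ ⊓ (aᶜ ⊓ bᶜ)ᶜ = ⊥ := by
      have := congrArg Compl.compl htop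
      rwa [OLaux.compl_sup, OLaux.top_compl] at this
    have hab : a ⊓ b ≤ (aᶜ ⊓ bᶜ)ᶜ := by
      exact le_trans inf_le_left (OLaux.compl_le_of_le_compl inf_le_left)
    have hbb : a ⊓ b ≤ b := inf_le_right
    have heq : a ⊓ b = (aᶜ ⊓ bᶜ)ᶜ := H _ _ hab h0
    have ha : a = a ⊓ b := by
      apply le_antisymm _ inf_le_left
      rw [heq]
      exact OLaux.compl_le_of_le_compl inf_le_left
    have hb : b = a ⊓ b := by
      apply le_antisymm _ inf_le_right
      rw [heq]
      exact OLaux.compl_le_of_le_compl inf_le_right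
    exact ha.trans hb.symm
  · intro H a b hab h0
    apply H
    have h1 : a ⊓ b = a := inf_eq_left.mpr hab
    have h2 : aᶜ ⊓ bᶜ = bᶜ := inf_eq_right.mpr (OLaux.anti hab)
    rw [h1, h2]
    -- aᶜ ⊓ b = ⊥ gives a ⊔ bᶜ = ⊤ via complements
    have := congrArg Compl.compl h0
    rw [OLaux.bot_compl] at this
    rw [← this]
    have h4 : (a ⊔ bᶜ)ᶜ = aᶜ ⊓ b := by
      rw [OLaux.compl_sup, OLaux.cc]
    rw [← h4, OLaux.cc]
end

section
/- In any orthomodular lattice, if a commutes with b and a commutes with c, then (a ∪₁ b) ∪₁ c = a ∪₁ (b ∪₁ c), where x ∪₁ y := x ∪ (x' ∩ y). -/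
section Aux

variable {α : Type*} [OrthomodularLattice α]

private lemma cc (a : α) : aᶜᶜ = a := Ortholattice.compl_compl a
private lemma ic (a : α) : a ⊓ aᶜ = ⊥ := Ortholattice.inf_compl a
private lemma ca {a b : α} (h : a ≤ b) : bᶜ ≤ aᶜ := Ortholattice.compl_antitone a b h
private lemma om {a b : α} (h : a ≤ b) : b = a ⊔ (aᶜ ⊓ b) :=
  OrthomodularLattice.orthomodular a b h

private lemma dm_sup (x y : α) : (x ⊔ y)ᶜ = xᶜ ⊓ yᶜ := by
  apply le_antisymm
  · exact le_inf (ca le_sup_left) (ca le_sup_right)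
  · have h1 : x ≤ (xᶜ ⊓ yᶜ)ᶜ := by
      have := ca (inf_le_left (a := xᶜ) (b := yᶜ)); rwa [cc] at this
    have h2 : y ≤ (xᶜ ⊓ yᶜ)ᶜ := by
      have := ca (inf_le_right (a := xᶜ) (b := yᶜ)); rwa [cc] at this
    have := ca (sup_le h1 h2)
    rwa [cc] at this

private lemma dm_inf (x y : α) : (x ⊓ y)ᶜ = xᶜ ⊔ yᶜ := by
  have h : (xᶜ ⊔ yᶜ)ᶜ = x ⊓ y := by rw [dm_sup, cc, cc]
  rw [← h, cc]

private lemma om_dual {p b : α} (h : p ≤ b) : p = b ⊓ (bᶜ ⊔ p) := by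
  have h2 := om (ca h)
  rw [cc] at h2
  calc p = pᶜᶜ := (cc p).symm
    _ = (bᶜ ⊔ (b ⊓ pᶜ))ᶜ := by rw [← h2]
    _ = b ⊓ (bᶜ ⊔ pᶜᶜ) := by rw [dm_sup, cc, dm_inf]
    _ = b ⊓ (bᶜ ⊔ p) := by rw [cc]

/-- `Cm a b` : `a` commutes with `b`. -/
def Cm (a b : α) : Prop := a = (a ⊓ b) ⊔ (a ⊓ bᶜ)

private lemma Cm.sym {a b : α} (h : Cm a b) : Cm b a := by
  have h : a = (a ⊓ b) ⊔ (a ⊓ bᶜ) := h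
  have hd : (a ⊓ b) ⊔ (aᶜ ⊓ b) ≤ b := sup_le inf_le_right inf_le_right
  have hob := om hd
  have habc : a ⊔ bᶜ = (a ⊓ b) ⊔ bᶜ := by
    conv_lhs => rw [h]
    rw [sup_assoc, sup_eq_right.mpr (inf_le_right : a ⊓ bᶜ ≤ bᶜ)]
  have hdc : ((a ⊓ b) ⊔ (aᶜ ⊓ b))ᶜ = (a ⊓ b)ᶜ ⊓ ((a ⊓ b) ⊔ bᶜ) := by
    rw [dm_sup, dm_inf aᶜ b, cc, habc]
  have hdual : a ⊓ b = b ⊓ (bᶜ ⊔ (a ⊓ b)) := om_dual inf_le_right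
  have hzero : ((a ⊓ b) ⊔ (aᶜ ⊓ b))ᶜ ⊓ b = ⊥ := by
    rw [hdc, inf_assoc, inf_comm ((a ⊓ b) ⊔ bᶜ) b, sup_comm, ← hdual, inf_comm, ic]
  rw [hzero, sup_bot_eq] at hob
  calc b = (a ⊓ b) ⊔ (aᶜ ⊓ b) := hob
    _ = (b ⊓ a) ⊔ (b ⊓ aᶜ) := by rw [inf_comm a b, inf_comm aᶜ b]

private lemma Cm.complr {a b : α} (h : Cm a b) : Cm a bᶜ := by
  unfold Cm
  rw [cc, sup_comm]
  exact h

private lemma Cm.compll {x a : α} (h : Cm x a) : Cm xᶜ a :=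
  (h.sym.complr).sym

private lemma Cm.supl {x y a : α} (hx : Cm x a) (hy : Cm y a) : Cm (x ⊔ y) a := by
  apply le_antisymm
  · calc x ⊔ y = ((x ⊓ a) ⊔ (x ⊓ aᶜ)) ⊔ ((y ⊓ a) ⊔ (y ⊓ aᶜ)) := by rw [← hx, ← hy]
      _ ≤ ((x ⊔ y) ⊓ a) ⊔ ((x ⊔ y) ⊓ aᶜ) := by
          apply sup_le <;> apply sup_le
          · exact le_sup_of_le_left (inf_le_inf_right a le_sup_left)
          · exact le_sup_of_le_right (inf_le_inf_right aᶜ le_sup_left)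
          · exact le_sup_of_le_left (inf_le_inf_right a le_sup_right)
          · exact le_sup_of_le_right (inf_le_inf_right aᶜ le_sup_right)
  · exact sup_le inf_le_left inf_le_left

private lemma Cm.infl {x y a : α} (hx : Cm x a) (hy : Cm y a) : Cm (x ⊓ y) a := by
  have h := (Cm.supl hx.compll hy.compll).compll
  rwa [dm_sup, cc, cc] at h

private lemma sup1_eq {x a : α} (h : Cm x a) : a ⊔ (aᶜ ⊓ x) = a ⊔ x := by
  apply le_antisymm
  · exact sup_le le_sup_left (le_trans inf_le_right le_sup_right)
  · apply sup_le le_sup_left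
    calc x = (x ⊓ a) ⊔ (x ⊓ aᶜ) := h
      _ ≤ a ⊔ (aᶜ ⊓ x) := by
          apply sup_le
          · exact le_sup_of_le_left inf_le_right
          · rw [inf_comm]; exact le_sup_right

end Aux

theorem stmt5 {α : Type*} [OrthomodularLattice α] (a b c : α) (hab : a = (a ⊓ b) ⊔ (a ⊓ bᶜ)) (hac : a = (a ⊓ c) ⊔ (a ⊓ cᶜ)) :
    (a ⊔ (aᶜ ⊓ b)) ⊔ ((a ⊔ (aᶜ ⊓ b))ᶜ ⊓ c) = a ⊔ (aᶜ ⊓ (b ⊔ (bᶜ ⊓ c))) := by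
  have hab' : Cm a b := hab
  have hac' : Cm a c := hac
  have hba : Cm b a := hab'.sym
  have hbc_a : Cm (bᶜ ⊓ c) a := Cm.infl hba.compll hac'.sym
  have hd_a : Cm (b ⊔ (bᶜ ⊓ c)) a := Cm.supl hba hbc_a
  rw [sup1_eq hba, sup1_eq hd_a, dm_sup]
  apply le_antisymm
  · apply sup_le
    · exact sup_le le_sup_left (le_sup_of_le_right le_sup_left)
    · exact le_sup_of_le_right
        (le_sup_of_le_right (inf_le_inf_right c inf_le_right))
  · apply sup_le (le_sup_of_le_left le_sup_left)
    apply sup_le (le_sup_of_le_left le_sup_right)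
    calc bᶜ ⊓ c = ((bᶜ ⊓ c) ⊓ a) ⊔ ((bᶜ ⊓ c) ⊓ aᶜ) := hbc_a
      _ ≤ (a ⊔ b) ⊔ ((aᶜ ⊓ bᶜ) ⊓ c) := by
          apply sup_le
          · exact le_sup_of_le_left (le_sup_of_le_left inf_le_right)
          · have h : (bᶜ ⊓ c) ⊓ aᶜ = (aᶜ ⊓ bᶜ) ⊓ c := by
              rw [inf_comm, ← inf_assoc]
            rw [h]; exact le_sup_right
end

section
/- In any orthomodular lattice, if a commutes with c and b commutes with c, then a ∪₁ (b ∩ c) = (a ∪₁ b) ∩ (a ∪ c), where x ∪₁ y := x ∪ (x' ∩ y). -/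
namespace OMLAux

variable {α : Type*} [OrthomodularLattice α]

open Ortholattice OrthomodularLattice

def Cm (a b : α) : Prop := a = (a ⊓ b) ⊔ (a ⊓ bᶜ)

lemma cc (a : α) : aᶜᶜ = a := Ortholattice.compl_compl a

lemma anti {a b : α} (h : a ≤ b) : bᶜ ≤ aᶜ := Ortholattice.compl_antitone a b h

lemma compl_sup (a b : α) : (a ⊔ b)ᶜ = aᶜ ⊓ bᶜ := by
  apply le_antisymm
  · exact le_inf (anti le_sup_left) (anti le_sup_right)
  · have h1 : a ≤ (aᶜ ⊓ bᶜ)ᶜ := by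
      have := anti (inf_le_left (a := aᶜ) (b := bᶜ)); rwa [cc] at this
    have h2 : b ≤ (aᶜ ⊓ bᶜ)ᶜ := by
      have := anti (inf_le_right (a := aᶜ) (b := bᶜ)); rwa [cc] at this
    have := anti (sup_le h1 h2); rwa [cc] at this

lemma compl_inf (a b : α) : (a ⊓ b)ᶜ = aᶜ ⊔ bᶜ := by
  have := compl_sup aᶜ bᶜ
  rw [cc, cc] at this
  rw [← this, cc]

lemma dualOM {x y : α} (h : x ≤ y) : x = y ⊓ (yᶜ ⊔ x) := by
  have h2 := orthomodular yᶜ xᶜ (anti h)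
  have h3 : x = (yᶜ ⊔ (yᶜᶜ ⊓ xᶜ))ᶜ := by rw [← h2, cc]
  conv_lhs => rw [h3]
  simp only [compl_sup, compl_inf, cc]

lemma lemK {a b : α} (h : Cm a b) : a ⊓ (aᶜ ⊔ b) ⊓ (aᶜ ⊔ bᶜ) = ⊥ := by
  have h' : aᶜ = (aᶜ ⊔ bᶜ) ⊓ (aᶜ ⊔ b) := by
    conv_lhs => rw [h]
    rw [compl_sup, compl_inf, compl_inf, cc]
  have e : a ⊓ (aᶜ ⊔ b) ⊓ (aᶜ ⊔ bᶜ) = a ⊓ ((aᶜ ⊔ bᶜ) ⊓ (aᶜ ⊔ b)) := by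
    rw [inf_assoc, inf_comm (aᶜ ⊔ b)]
  rw [e, ← h', Ortholattice.inf_compl]

lemma lemL {a b : α} (h : Cm a b) : a ⊓ (aᶜ ⊔ b) = a ⊓ b := by
  have h1 : a ⊓ b ≤ a ⊓ (aᶜ ⊔ b) := le_inf inf_le_left (le_trans inf_le_right le_sup_right)
  have h2 := orthomodular _ _ h1
  have h3 : (a ⊓ b)ᶜ ⊓ (a ⊓ (aᶜ ⊔ b)) = ⊥ := by
    rw [compl_inf, inf_comm (aᶜ ⊔ bᶜ) (a ⊓ (aᶜ ⊔ b))]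
    exact lemK h
  rw [h3, sup_bot_eq] at h2
  exact h2

lemma cm_compl_right {a b : α} (h : Cm a b) : Cm a bᶜ := by
  unfold Cm at *
  rw [cc, sup_comm]
  exact h

lemma cm_symm {a b : α} (h : Cm a b) : Cm b a := by
  have h1 : (b ⊓ a) ⊔ (b ⊓ aᶜ) ≤ b := sup_le inf_le_left inf_le_left
  have h2 := orthomodular _ _ h1
  have hba : bᶜ ⊔ a = bᶜ ⊔ (a ⊓ b) := by
    conv_lhs => rw [h]
    rw [← sup_assoc, sup_comm bᶜ (a ⊓ b), sup_assoc, sup_eq_left.mpr (inf_le_right : a ⊓ bᶜ ≤ bᶜ), sup_comm]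
  have hd : a ⊓ b = b ⊓ (bᶜ ⊔ (a ⊓ b)) := dualOM inf_le_right
  have h3 : ((b ⊓ a) ⊔ (b ⊓ aᶜ))ᶜ ⊓ b = ⊥ := by
    rw [compl_sup, compl_inf, compl_inf, cc]
    have e1 : (bᶜ ⊔ aᶜ) ⊓ (bᶜ ⊔ a) ⊓ b = b ⊓ (bᶜ ⊔ a) ⊓ (bᶜ ⊔ aᶜ) := by ac_rfl
    rw [e1, hba, ← hd, ← compl_inf b a, inf_comm a b]
    exact Ortholattice.inf_compl _
  rw [h3, sup_bot_eq] at h2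
  exact h2

lemma cm_inf {z a b : α} (ha : Cm z a) (hb : Cm z b) : Cm z (a ⊓ b) := by
  have h1 : (z ⊓ (a ⊓ b)) ⊔ (z ⊓ (a ⊓ b)ᶜ) ≤ z := sup_le inf_le_left inf_le_left
  have h2 := orthomodular _ _ h1
  have key : z ⊓ (zᶜ ⊔ (a ⊓ b)) ≤ z ⊓ (a ⊓ b) := by
    have ka : z ⊓ (zᶜ ⊔ (a ⊓ b)) ≤ z ⊓ a := by
      rw [← lemL ha]
      exact le_inf inf_le_left (le_trans inf_le_right (sup_le_sup_left inf_le_left _))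
    have kb : z ⊓ (zᶜ ⊔ (a ⊓ b)) ≤ z ⊓ b := by
      rw [← lemL hb]
      exact le_inf inf_le_left (le_trans inf_le_right (sup_le_sup_left inf_le_right _))
    exact le_inf inf_le_left (le_inf (le_trans ka inf_le_right) (le_trans kb inf_le_right))
  have h3 : ((z ⊓ (a ⊓ b)) ⊔ (z ⊓ (a ⊓ b)ᶜ))ᶜ ⊓ z = ⊥ := by
    rw [compl_sup, ← le_bot_iff]
    have e : (z ⊓ (a ⊓ b)ᶜ)ᶜ = zᶜ ⊔ (a ⊓ b) := by rw [compl_inf, cc]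
    rw [e]
    have hle2 : (z ⊓ (a ⊓ b))ᶜ ⊓ (zᶜ ⊔ (a ⊓ b)) ⊓ z ≤ z ⊓ (a ⊓ b) :=
      le_trans (le_inf inf_le_right (le_trans inf_le_left inf_le_right)) key
    have hle1 : (z ⊓ (a ⊓ b))ᶜ ⊓ (zᶜ ⊔ (a ⊓ b)) ⊓ z ≤ (z ⊓ (a ⊓ b))ᶜ :=
      le_trans inf_le_left inf_le_left
    have h4 := le_inf hle2 hle1
    rwa [Ortholattice.inf_compl] at h4
  rw [h3, sup_bot_eq] at h2
  exact h2

end OMLAux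

theorem stmt11 {α : Type*} [OrthomodularLattice α] (a b c : α) (hac : a = (a ⊓ c) ⊔ (a ⊓ cᶜ)) (hbc : b = (b ⊓ c) ⊔ (b ⊓ cᶜ)) :
    a ⊔ (aᶜ ⊓ (b ⊓ c)) = (a ⊔ (aᶜ ⊓ b)) ⊓ (a ⊔ c) := by
  have hca : OMLAux.Cm c a := OMLAux.cm_symm hac
  have hcb : OMLAux.Cm c b := OMLAux.cm_symm hbc
  have hcA : OMLAux.Cm c aᶜ := OMLAux.cm_compl_right hca
  have hAc : OMLAux.Cm aᶜ c := OMLAux.cm_symm hcA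
  have hcy : OMLAux.Cm c (aᶜ ⊓ b) := OMLAux.cm_inf hcA hcb
  have hcY : OMLAux.Cm c (aᶜ ⊓ b)ᶜ := OMLAux.cm_compl_right hcy
  have huw : a ⊔ (aᶜ ⊓ (b ⊓ c)) ≤ (a ⊔ (aᶜ ⊓ b)) ⊓ (a ⊔ c) :=
    sup_le (le_inf le_sup_left le_sup_left)
      (le_inf (le_trans (le_inf inf_le_left (le_trans inf_le_right inf_le_left)) le_sup_right)
              (le_trans (le_trans inf_le_right inf_le_right) le_sup_right))
  have h2 := OrthomodularLattice.orthomodular _ _ huw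
  have e1 : aᶜ ⊓ (a ⊔ c) = aᶜ ⊓ c := by
    have := OMLAux.lemL hAc; rwa [OMLAux.cc] at this
  have e2 : c ⊓ (cᶜ ⊔ (aᶜ ⊓ b)ᶜ) = c ⊓ (aᶜ ⊓ b)ᶜ := OMLAux.lemL hcY
  have hu : (a ⊔ (aᶜ ⊓ (b ⊓ c)))ᶜ = aᶜ ⊓ ((aᶜ ⊓ b)ᶜ ⊔ cᶜ) := by
    rw [OMLAux.compl_sup, ← inf_assoc, OMLAux.compl_inf]
  have key1 : (a ⊔ (aᶜ ⊓ (b ⊓ c)))ᶜ ⊓ ((a ⊔ (aᶜ ⊓ b)) ⊓ (a ⊔ c)) ≤ aᶜ ⊓ c := by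
    rw [← e1]
    exact le_inf (by rw [hu]; exact le_trans inf_le_left inf_le_left)
      (le_trans inf_le_right inf_le_right)
  have key2 : (a ⊔ (aᶜ ⊓ (b ⊓ c)))ᶜ ⊓ ((a ⊔ (aᶜ ⊓ b)) ⊓ (a ⊔ c)) ≤ c ⊓ (aᶜ ⊓ b)ᶜ := by
    rw [← e2]
    refine le_inf (le_trans key1 inf_le_right) ?_
    rw [hu, sup_comm cᶜ (aᶜ ⊓ b)ᶜ]
    exact le_trans inf_le_left inf_le_right
  have key3 : (a ⊔ (aᶜ ⊓ (b ⊓ c)))ᶜ ⊓ ((a ⊔ (aᶜ ⊓ b)) ⊓ (a ⊔ c)) ≤ a ⊔ (aᶜ ⊓ b) :=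
    le_trans inf_le_right inf_le_left
  have h3 : (a ⊔ (aᶜ ⊓ (b ⊓ c)))ᶜ ⊓ ((a ⊔ (aᶜ ⊓ b)) ⊓ (a ⊔ c)) = ⊥ := by
    rw [← le_bot_iff]
    have h4 : (a ⊔ (aᶜ ⊓ (b ⊓ c)))ᶜ ⊓ ((a ⊔ (aᶜ ⊓ b)) ⊓ (a ⊔ c)) ≤
        (a ⊔ (aᶜ ⊓ b)) ⊓ (a ⊔ (aᶜ ⊓ b))ᶜ :=
      le_inf key3 (by
        rw [OMLAux.compl_sup a (aᶜ ⊓ b)]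
        exact le_inf (le_trans key1 inf_le_left) (le_trans key2 inf_le_right))
    rwa [Ortholattice.inf_compl] at h4
  rw [h3, sup_bot_eq] at h2
  exact h2.symm
end

section
/- In any orthomodular lattice, the mixed distributive law a ∪₁ (b ∩ c) = (a ∪₁ b) ∩ (a ∪₁ c) holds unconditionally for all a, b, c, where x ∪₁ y := x ∪ (x' ∩ y). -/
lemma aux_key {α : Type*} [OrthomodularLattice α] {a x : α} (hx : x ≤ aᶜ) :
    aᶜ ⊓ (a ⊔ x) = x := by
  have hxz : x ≤ aᶜ ⊓ (a ⊔ x) := le_inf hx le_sup_right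
  have h := OrthomodularLattice.orthomodular x (aᶜ ⊓ (a ⊔ x)) hxz
  -- show xᶜ ⊓ (aᶜ ⊓ (a ⊔ x)) = ⊥
  have hle : aᶜ ⊓ xᶜ ≤ (a ⊔ x)ᶜ := by
    have h1 : a ≤ (aᶜ ⊓ xᶜ)ᶜ := by
      have := Ortholattice.compl_antitone (aᶜ ⊓ xᶜ) aᶜ inf_le_left
      rwa [Ortholattice.compl_compl] at this
    have h2 : x ≤ (aᶜ ⊓ xᶜ)ᶜ := by
      have := Ortholattice.compl_antitone (aᶜ ⊓ xᶜ) xᶜ inf_le_right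
      rwa [Ortholattice.compl_compl] at this
    have h3 : a ⊔ x ≤ (aᶜ ⊓ xᶜ)ᶜ := sup_le h1 h2
    have := Ortholattice.compl_antitone _ _ h3
    rwa [Ortholattice.compl_compl] at this
  have hbot : xᶜ ⊓ (aᶜ ⊓ (a ⊔ x)) = ⊥ := by
    apply le_antisymm _ bot_le
    calc xᶜ ⊓ (aᶜ ⊓ (a ⊔ x)) ≤ (aᶜ ⊓ xᶜ) ⊓ (a ⊔ x) := by
          refine le_inf (le_inf ?_ ?_) ?_
          · exact le_trans inf_le_right inf_le_left
          · exact inf_le_left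
          · exact le_trans inf_le_right inf_le_right
      _ ≤ (a ⊔ x)ᶜ ⊓ (a ⊔ x) := inf_le_inf_right _ hle
      _ = ⊥ := by rw [inf_comm, Ortholattice.inf_compl]
  rw [hbot, sup_bot_eq] at h
  exact h

theorem stmt12 {α : Type*} [OrthomodularLattice α] (a b c : α) :
    a ⊔ (aᶜ ⊓ (b ⊓ c)) = (a ⊔ (aᶜ ⊓ b)) ⊓ (a ⊔ (aᶜ ⊓ c)) := by
  apply le_antisymm
  · exact le_inf (sup_le_sup_left (inf_le_inf_left _ inf_le_left) _)
      (sup_le_sup_left (inf_le_inf_left _ inf_le_right) _)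
  · set d := (a ⊔ (aᶜ ⊓ b)) ⊓ (a ⊔ (aᶜ ⊓ c)) with hd
    have ha : a ≤ d := le_inf le_sup_left le_sup_left
    have h := OrthomodularLattice.orthomodular a d ha
    have h1 : aᶜ ⊓ d ≤ aᶜ ⊓ b := by
      have : aᶜ ⊓ d ≤ aᶜ ⊓ (a ⊔ (aᶜ ⊓ b)) :=
        inf_le_inf_left _ inf_le_left
      rwa [aux_key inf_le_left] at this
    have h2 : aᶜ ⊓ d ≤ aᶜ ⊓ c := by
      have : aᶜ ⊓ d ≤ aᶜ ⊓ (a ⊔ (aᶜ ⊓ c)) :=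
        inf_le_inf_left _ inf_le_right
      rwa [aux_key inf_le_left] at this
    have h3 : aᶜ ⊓ d ≤ aᶜ ⊓ (b ⊓ c) :=
      le_inf (le_trans h1 inf_le_left)
        (le_inf (le_trans h1 inf_le_right) (le_trans h2 inf_le_right))
    calc d = a ⊔ (aᶜ ⊓ d) := h
      _ ≤ a ⊔ (aᶜ ⊓ (b ⊓ c)) := sup_le_sup_left h3 _
end

section
/- In any orthomodular lattice, (a ≡ c) ∪ (b ≡ c) = ((a →₂ c) ∪ (b →₂ c)) ∩ ((c →₁ a) ∪ (c →₁ b)), where x ≡ y := (x ∩ y) ∪ (x' ∩ y'), x →₁ y := x' ∪ (x ∩ y), and x →₂ y := y' →₁ x' = y ∪ (x' ∩ y'). -/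
section aux
variable {α : Type*} [OrthomodularLattice α]

private lemma le_compl_of (x y : α) (h : x ≤ yᶜ) : y ≤ xᶜ := by
  have := Ortholattice.compl_antitone x yᶜ h
  rwa [Ortholattice.compl_compl] at this

private lemma compl_inf_le' (x y : α) : xᶜ ⊓ yᶜ ≤ (x ⊔ y)ᶜ := by
  apply le_compl_of
  exact sup_le (le_compl_of _ _ inf_le_left) (le_compl_of _ _ inf_le_right)

private lemma meet_join (u v : α) (h : u ≤ vᶜ) : vᶜ ⊓ (v ⊔ u) = u := by
  have h1 : u ≤ vᶜ ⊓ (v ⊔ u) := le_inf h le_sup_right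
  have h2 := OrthomodularLattice.orthomodular u (vᶜ ⊓ (v ⊔ u)) h1
  have h3 : uᶜ ⊓ (vᶜ ⊓ (v ⊔ u)) = ⊥ := by
    apply le_antisymm _ bot_le
    have hle : uᶜ ⊓ (vᶜ ⊓ (v ⊔ u)) ≤ (v ⊔ u) ⊓ (v ⊔ u)ᶜ := by
      refine le_inf (inf_le_right.trans inf_le_right) ?_
      have : uᶜ ⊓ (vᶜ ⊓ (v ⊔ u)) ≤ uᶜ ⊓ vᶜ :=
        le_inf inf_le_left (inf_le_right.trans inf_le_left)
      refine this.trans ((compl_inf_le' u v).trans ?_)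
      rw [sup_comm u v]
    exact hle.trans (Ortholattice.inf_compl _).le
  rw [h3, sup_bot_eq] at h2
  exact h2

private lemma key (X Y c : α) (hX : X ≤ cᶜ) (hY : Y ≤ c) :
    (c ⊔ X) ⊓ (cᶜ ⊔ Y) = X ⊔ Y := by
  have hXY : X ⊔ Y ≤ (c ⊔ X) ⊓ (cᶜ ⊔ Y) :=
    le_inf (sup_le le_sup_right (hY.trans le_sup_left))
           (sup_le (hX.trans le_sup_left) le_sup_right)
  have h2 := OrthomodularLattice.orthomodular _ _ hXY
  have hA : Xᶜ ⊓ (X ⊔ c) = c := meet_join c X (le_compl_of _ _ hX)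
  have hB : Yᶜ ⊓ (Y ⊔ cᶜ) = cᶜ := by
    refine meet_join cᶜ Y (le_compl_of _ _ ?_)
    rwa [Ortholattice.compl_compl]
  have h3 : (X ⊔ Y)ᶜ ⊓ ((c ⊔ X) ⊓ (cᶜ ⊔ Y)) = ⊥ := by
    apply le_antisymm _ bot_le
    have hcX : (X ⊔ Y)ᶜ ⊓ ((c ⊔ X) ⊓ (cᶜ ⊔ Y)) ≤ c := by
      have h4 : (X ⊔ Y)ᶜ ⊓ ((c ⊔ X) ⊓ (cᶜ ⊔ Y)) ≤ Xᶜ ⊓ (X ⊔ c) := by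
        refine le_inf (inf_le_left.trans (Ortholattice.compl_antitone _ _ le_sup_left)) ?_
        exact (inf_le_right.trans inf_le_left).trans (sup_comm c X).le
      exact h4.trans hA.le
    have hcY : (X ⊔ Y)ᶜ ⊓ ((c ⊔ X) ⊓ (cᶜ ⊔ Y)) ≤ cᶜ := by
      have h4 : (X ⊔ Y)ᶜ ⊓ ((c ⊔ X) ⊓ (cᶜ ⊔ Y)) ≤ Yᶜ ⊓ (Y ⊔ cᶜ) := by
        refine le_inf (inf_le_left.trans (Ortholattice.compl_antitone _ _ le_sup_right)) ?_
        exact (inf_le_right.trans inf_le_right).trans (sup_comm cᶜ Y).le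
      exact h4.trans hB.le
    exact (le_inf hcX hcY).trans (Ortholattice.inf_compl c).le
  rw [h3, sup_bot_eq] at h2
  exact h2

end aux

theorem stmt14 {α : Type*} [OrthomodularLattice α] (a b c : α) :
    ((a ⊓ c) ⊔ (aᶜ ⊓ cᶜ)) ⊔ ((b ⊓ c) ⊔ (bᶜ ⊓ cᶜ)) =
      ((c ⊔ (aᶜ ⊓ cᶜ)) ⊔ (c ⊔ (bᶜ ⊓ cᶜ))) ⊓ ((cᶜ ⊔ (c ⊓ a)) ⊔ (cᶜ ⊔ (c ⊓ b))) := by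
  set X := (aᶜ ⊓ cᶜ) ⊔ (bᶜ ⊓ cᶜ) with hXdef
  set Y := (c ⊓ a) ⊔ (c ⊓ b) with hYdef
  have hX : X ≤ cᶜ := sup_le inf_le_right inf_le_right
  have hY : Y ≤ c := sup_le inf_le_left inf_le_left
  have hR1 : (c ⊔ (aᶜ ⊓ cᶜ)) ⊔ (c ⊔ (bᶜ ⊓ cᶜ)) = c ⊔ X := by
    rw [hXdef, sup_sup_sup_comm, sup_idem]
  have hR2 : (cᶜ ⊔ (c ⊓ a)) ⊔ (cᶜ ⊔ (c ⊓ b)) = cᶜ ⊔ Y := by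
    rw [hYdef, sup_sup_sup_comm, sup_idem]
  have hL : ((a ⊓ c) ⊔ (aᶜ ⊓ cᶜ)) ⊔ ((b ⊓ c) ⊔ (bᶜ ⊓ cᶜ)) = X ⊔ Y := by
    rw [hXdef, hYdef, inf_comm c a, inf_comm c b, sup_sup_sup_comm, sup_comm (a ⊓ c) (b ⊓ c),
      sup_comm ((aᶜ ⊓ cᶜ) ⊔ (bᶜ ⊓ cᶜ)) ((b ⊓ c) ⊔ (a ⊓ c)), sup_comm (b ⊓ c) (a ⊓ c)]
  rw [hL, hR1, hR2, key X Y c hX hY]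
end

section
/- In any orthomodular lattice, (a ≡ c) ∪ (b ≡ c) ≤ ((a ∩ b) →₂ c) ∩ (c →₁ (a ∪ b)), where x ≡ y := (x ∩ y) ∪ (x' ∩ y'), x →₁ y := x' ∪ (x ∩ y), and x →₂ y := y ∪ (x' ∩ y'). -/
theorem stmt15 {α : Type*} [OrthomodularLattice α] (a b c : α) :
    ((a ⊓ c) ⊔ (aᶜ ⊓ cᶜ)) ⊔ ((b ⊓ c) ⊔ (bᶜ ⊓ cᶜ)) ≤
      (c ⊔ ((a ⊓ b)ᶜ ⊓ cᶜ)) ⊓ (cᶜ ⊔ (c ⊓ (a ⊔ b))) := by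
  refine sup_le (sup_le ?_ ?_) (sup_le ?_ ?_) <;> refine le_inf ?_ ?_
  · exact le_sup_of_le_left inf_le_right
  · exact le_sup_of_le_right (le_inf inf_le_right (le_sup_of_le_left inf_le_left))
  · exact le_sup_of_le_right
      (inf_le_inf_right _ (Ortholattice.compl_antitone _ _ inf_le_left))
  · exact le_sup_of_le_left inf_le_right
  · exact le_sup_of_le_left inf_le_right
  · exact le_sup_of_le_right (le_inf inf_le_right (le_sup_of_le_right inf_le_left))
  · exact le_sup_of_le_right
      (inf_le_inf_right _ (Ortholattice.compl_antitone _ _ inf_le_right))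
  · exact le_sup_of_le_left inf_le_right
end

section
/- In any orthomodular lattice, (a ∪ b) ≡ (a ∩ b) = a ≡ b, where x ≡ y := (x ∩ y) ∪ (x' ∩ y'). -/
lemma my_demorgan {α : Type*} [Ortholattice α] (a b : α) : (a ⊔ b)ᶜ = aᶜ ⊓ bᶜ := by
  apply le_antisymm
  · exact le_inf (Ortholattice.compl_antitone _ _ le_sup_left)
      (Ortholattice.compl_antitone _ _ le_sup_right)
  · have h : a ⊔ b ≤ (aᶜ ⊓ bᶜ)ᶜ := by
      apply sup_le
      · have := Ortholattice.compl_antitone (aᶜ ⊓ bᶜ) aᶜ inf_le_left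
        rwa [Ortholattice.compl_compl] at this
      · have := Ortholattice.compl_antitone (aᶜ ⊓ bᶜ) bᶜ inf_le_right
        rwa [Ortholattice.compl_compl] at this
    have := Ortholattice.compl_antitone _ _ h
    rwa [Ortholattice.compl_compl] at this

theorem stmt17 {α : Type*} [OrthomodularLattice α] (a b : α) :
    ((a ⊔ b) ⊓ (a ⊓ b)) ⊔ ((a ⊔ b)ᶜ ⊓ (a ⊓ b)ᶜ) = (a ⊓ b) ⊔ (aᶜ ⊓ bᶜ) := by
  have h1 : (a ⊔ b) ⊓ (a ⊓ b) = a ⊓ b :=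
    inf_eq_right.mpr (le_trans inf_le_left le_sup_left)
  have h2 : (a ⊔ b)ᶜ ⊓ (a ⊓ b)ᶜ = aᶜ ⊓ bᶜ := by
    have hle : (a ⊔ b)ᶜ ≤ (a ⊓ b)ᶜ :=
      Ortholattice.compl_antitone _ _ (le_trans inf_le_left le_sup_left)
    rw [inf_eq_left.mpr hle, my_demorgan]
  rw [h1, h2]
end
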